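/- arXiv:2503.05399 — 2 statements merged into one kernel-verified Lean document; each statement's English description precedes it below -/
import Mathlib

section
/- Let E ⊆ T² be an open set of class C² with |E| = m and P(E) ≤ M, and suppose two distinct connected components Γ_i, Γ_j of ∂E satisfy ∫_{Γ_i} κ_E dH¹ = 0 and ∫_{Γ_j} κ_E dH¹ = 2π. Then ε := ‖κ_E − κ̄_E‖_{L²(∂E)} satisfies H¹(Γ_i) ≤ C(M) ε², where κ̄_E is the average of κ_E over ∂E. In particular, if ε is small enough (depending on M) this contradicts H¹(Γ_i) ≥ 1, so such a pair of components cannot exist for small ε. -/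
/-!
Write `c` for the mean curvature and `ε² = ∫ (κ - c)²`. By Cauchy–Schwarz, on any piece `Γ`
of the boundary `(∫_Γ κ - c |Γ|)² ≤ |Γ| ε²`. On the flat piece this reads `c² |Γi| ≤ ε²`; on
the round piece it reads `(2π - c |Γj|)² ≤ M ε²`, which for `M ε² < π²` forces `c M ≥ c |Γj| > π`.
Hence `|Γi| ≤ ε² / c² ≤ (M / π)² ε²`, while for `M ε² ≥ π²` the bound `|Γi| ≤ M` already suffices.
-/

open MeasureTheory

theorem sq_integral_le_measureReal_univ_mul_integral_sq {α : Type*} [MeasurableSpace α]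
    (ν : Measure α) [IsFiniteMeasure ν] {f : α → ℝ} (hf : MemLp f 2 ν) :
    (∫ x, f x ∂ν) ^ 2 ≤ ν.real Set.univ * ∫ x, f x ^ 2 ∂ν := by
  rcases eq_zero_or_neZero ν with rfl | hν
  · simp
  have hjensen : (⨍ x, f x ∂ν) ^ 2 ≤ ⨍ x, f x ^ 2 ∂ν :=
    even_two.convexOn_pow.map_average_le (continuous_pow 2).continuousOn isClosed_univ
      (by simp) (hf.integrable one_le_two) hf.integrable_sq
  have hm : 0 < ν.real Set.univ := by
    simp [measureReal_def, ENNReal.toReal_pos_iff, NeZero.ne ν]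
  rw [average_eq, average_eq, smul_eq_mul, smul_eq_mul, mul_pow] at hjensen
  field_simp at hjensen
  exact hjensen

theorem sq_setIntegral_sub_const_mul_le {α : Type*} [MeasurableSpace α] {μ : Measure α}
    [IsFiniteMeasure μ] {κ : α → ℝ} (hκ : MemLp κ 2 μ) (s : Set α) (c : ℝ) :
    ((∫ x in s, κ x ∂μ) - c * μ.real s) ^ 2 ≤ μ.real s * ∫ x, (κ x - c) ^ 2 ∂μ := by
  have hf : MemLp (fun x => κ x - c) 2 μ := hκ.sub (memLp_const c)
  have hint : ∫ x in s, (κ x - c) ∂μ = (∫ x in s, κ x ∂μ) - c * μ.real s := by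
    rw [integral_sub (hκ.integrable one_le_two).integrableOn (integrable_const c),
      setIntegral_const, smul_eq_mul, mul_comm]
  calc ((∫ x in s, κ x ∂μ) - c * μ.real s) ^ 2
      ≤ (μ.restrict s).real Set.univ * ∫ x in s, (κ x - c) ^ 2 ∂μ :=
        hint ▸ sq_integral_le_measureReal_univ_mul_integral_sq _ (hf.restrict s)
    _ ≤ μ.real s * ∫ x, (κ x - c) ^ 2 ∂μ := by
        rw [measureReal_restrict_apply_univ]
        exact mul_le_mul_of_nonneg_left
          (setIntegral_le_integral hf.integrable_sq (.of_forall fun _ => sq_nonneg _))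
          measureReal_nonneg

theorem le_sq_div_mul_of_flat_of_round {M t c e si sj : ℝ} (ht : 0 < t) (he : 0 ≤ e)
    (hsi : 0 ≤ si) (hsiM : si ≤ M) (hsj : 0 ≤ sj) (hsjM : sj ≤ M)
    (hflat : (c * si) ^ 2 ≤ si * e) (hround : (t - c * sj) ^ 2 ≤ sj * e) :
    si ≤ (2 * M / t) ^ 2 * e := by
  have hflat' : c ^ 2 * si ≤ e := by
    rcases hsi.eq_or_lt with rfl | hsi_pos
    · simpa using he
    · nlinarith
  rw [div_pow, div_mul_eq_mul_div, le_div_iff₀ (by positivity)]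
  rcases le_or_gt (t ^ 2) (4 * M * e) with hlarge | hsmall
  · nlinarith
  · have hcsj : t < 2 * (c * sj) := by nlinarith
    have hc : 0 < c := pos_of_mul_pos_left (by linarith) hsj
    have hcM : t < 2 * (c * M) := by nlinarith
    calc si * t ^ 2 ≤ si * (2 * (c * M)) ^ 2 := by gcongr
      _ = (2 * M) ^ 2 * (c ^ 2 * si) := by ring
      _ ≤ (2 * M) ^ 2 * e := by gcongr

theorem length_bound_for_flat_and_round_components
    (M : ℝ) (hM : 0 < M) :
    ∃ C : ℝ, 0 < C ∧
      ∀ (α : Type) (_ : MeasurableSpace α) (μ : Measure α)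
        (κ : α → ℝ) (Γi Γj : Set α),
        μ Set.univ ≤ ENNReal.ofReal M →
        MeasurableSet Γi → MeasurableSet Γj → Disjoint Γi Γj →
        MemLp κ 2 μ →
        (∫ p in Γi, κ p ∂μ) = 0 →
        (∫ p in Γj, κ p ∂μ) = 2 * Real.pi →
        (μ Γi).toReal ≤
          C * ∫ p, (κ p - (∫ q, κ q ∂μ) / (μ Set.univ).toReal) ^ 2 ∂μ := by
  refine ⟨(M / Real.pi) ^ 2, by positivity, ?_⟩
  intro α _ μ κ Γi Γj hμM _ _ _ hκ hi hj
  have : IsFiniteMeasure μ := ⟨hμM.trans_lt ENNReal.ofReal_lt_top⟩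
  have hle : ∀ s, μ.real s ≤ M := fun s =>
    ENNReal.toReal_le_of_le_ofReal hM.le ((measure_mono (Set.subset_univ s)).trans hμM)
  set c := (∫ q, κ q ∂μ) / (μ Set.univ).toReal
  have hflat := sq_setIntegral_sub_const_mul_le hκ Γi c
  have hround := sq_setIntegral_sub_const_mul_le hκ Γj c
  rw [hi, zero_sub, neg_sq] at hflat
  rw [hj] at hround
  have := le_sq_div_mul_of_flat_of_round Real.two_pi_pos
    (integral_nonneg fun _ => sq_nonneg _) measureReal_nonneg (hle Γi) measureReal_nonneg (hle Γj)
    hflat hround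
  rwa [mul_div_mul_left _ _ two_ne_zero] at this
end

section
/- Let E ⊆ T² be a C² set all of whose boundary components Γ₁, …, Γ_k have total curvature 0 (hence each is a closed geodesic-homotopic loop of length ≥ 1), and suppose each Γ_i is the normal graph of a function f_i over a line L_i with ‖f_i‖_{C¹(L_i)} ≤ ε. If S is the union of parallel strips with ∂S = ∪ L_i (after parallel shifting so that each component E_i of E has the same area as the corresponding strip S_i), then 0 ≤ P(E) − P(S) ≤ C ∑_i ‖f_i‖²_{C¹(L_i)} ≤ C k ε². -/
open MeasureTheory

lemma sqrt_one_add_sq_le (x : ℝ) : Real.sqrt (1 + x ^ 2) ≤ 1 + x ^ 2 / 2 := by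
  rw [show (1 : ℝ) + x ^ 2 / 2 = Real.sqrt ((1 + x ^ 2 / 2) ^ 2) from
    (Real.sqrt_sq (by positivity)).symm]
  apply Real.sqrt_le_sqrt
  nlinarith [sq_nonneg x, sq_nonneg (x ^ 2)]

lemma per_component (ℓ ε : ℝ) (hℓ : 0 < ℓ) (hε : 0 ≤ ε) (g : ℝ → ℝ)
    (hg : Continuous g) (hb : ∀ s ∈ Set.Icc (0:ℝ) ℓ, |g s| ≤ ε) :
    ℓ ≤ (∫ s in (0:ℝ)..ℓ, Real.sqrt (1 + (g s) ^ 2)) ∧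
    (∫ s in (0:ℝ)..ℓ, Real.sqrt (1 + (g s) ^ 2)) ≤ ℓ + ℓ * ε ^ 2 / 2 := by
  have hcont : Continuous fun s => Real.sqrt (1 + (g s) ^ 2) := by
    exact (continuous_const.add (hg.pow 2)).sqrt
  have hint : IntervalIntegrable (fun s => Real.sqrt (1 + (g s) ^ 2)) volume 0 ℓ :=
    hcont.intervalIntegrable 0 ℓ
  constructor
  · have := intervalIntegral.integral_mono_on hℓ.le
      (intervalIntegrable_const (c := (1:ℝ))) hint
      (fun s _ => by
        have := Real.sqrt_le_sqrt (show (1:ℝ) ≤ 1 + (g s) ^ 2 by nlinarith [sq_nonneg (g s)])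
        simpa using this)
    simpa using this
  · have := intervalIntegral.integral_mono_on hℓ.le hint
      (intervalIntegrable_const (c := (1 + ε ^ 2 / 2 : ℝ)))
      (fun s hs => by
        have h1 := sqrt_one_add_sq_le (g s)
        have h2 : (g s) ^ 2 ≤ ε ^ 2 := by
          have := hb s hs
          nlinarith [abs_nonneg (g s), sq_abs (g s)]
        linarith)
    simp only [intervalIntegral.integral_const, smul_eq_mul, sub_zero] at this
    linarith [this]

theorem perimeter_excess_of_graphs_over_lines
    (k : ℕ) (hk : 0 < k) (ℓ : Fin k → ℝ) (hℓ : ∀ i, 0 < ℓ i) :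
    ∃ C : ℝ, 0 < C ∧
      ∀ (ε : ℝ), 0 ≤ ε →
      ∀ (f f' : Fin k → ℝ → ℝ),
        (∀ i, Continuous (f' i)) →
        (∀ i s, HasDerivAt (f i) (f' i s) s) →
        (∀ i, ∀ s ∈ Set.Icc (0:ℝ) (ℓ i), |f i s| ≤ ε ∧ |f' i s| ≤ ε) →
        0 ≤ (∑ i, ∫ s in (0:ℝ)..(ℓ i), Real.sqrt (1 + (f' i s) ^ 2)) - (∑ i, ℓ i)
        ∧ (∑ i, ∫ s in (0:ℝ)..(ℓ i), Real.sqrt (1 + (f' i s) ^ 2)) - (∑ i, ℓ i)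
            ≤ C * (k * ε ^ 2) := by
  have hne : Nonempty (Fin k) := ⟨⟨0, hk⟩⟩
  have hpos : 0 < ∑ i, ℓ i := Finset.sum_pos (fun i _ => hℓ i) Finset.univ_nonempty
  refine ⟨(∑ i, ℓ i) / 2, by linarith, ?_⟩
  intro ε hε f f' hf' hderiv hbound
  have key : ∀ i, ℓ i ≤ (∫ s in (0:ℝ)..(ℓ i), Real.sqrt (1 + (f' i s) ^ 2)) ∧
      (∫ s in (0:ℝ)..(ℓ i), Real.sqrt (1 + (f' i s) ^ 2)) ≤ ℓ i + ℓ i * ε ^ 2 / 2 :=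
    fun i => per_component (ℓ i) ε (hℓ i) hε (f' i) (hf' i)
      (fun s hs => (hbound i s hs).2)
  constructor
  · have : (∑ i, ℓ i) ≤ ∑ i, ∫ s in (0:ℝ)..(ℓ i), Real.sqrt (1 + (f' i s) ^ 2) :=
      Finset.sum_le_sum fun i _ => (key i).1
    linarith
  · have h1 : (∑ i, ∫ s in (0:ℝ)..(ℓ i), Real.sqrt (1 + (f' i s) ^ 2))
        ≤ ∑ i, (ℓ i + ℓ i * ε ^ 2 / 2) :=
      Finset.sum_le_sum fun i _ => (key i).2
    have h2 : (∑ i, (ℓ i + ℓ i * ε ^ 2 / 2)) = (∑ i, ℓ i) + (∑ i, ℓ i) * ε ^ 2 / 2 := by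
      rw [Finset.sum_add_distrib, ← Finset.sum_div, ← Finset.sum_mul]
    have h3 : (∑ i, ℓ i) * ε ^ 2 / 2 ≤ (∑ i, ℓ i) / 2 * (k * ε ^ 2) := by
      have hk1 : (1 : ℝ) ≤ k := by exact_mod_cast hk
      have hsum : 0 ≤ (∑ i, ℓ i) := Finset.sum_nonneg fun i _ => (hℓ i).le
      nlinarith [mul_nonneg (mul_nonneg hsum (by linarith : (0:ℝ) ≤ (k:ℝ) - 1)) (sq_nonneg ε)]
    linarith
end
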